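/- The sequence a_n = (−1)^n · Q_{i,n}/(2n+1) with Q_{i,n} = ∏_{j=1}^{n} ((i+1)/(2j) − 1) tends to 0 as n → ∞, for every fixed natural i ≥ 1. -/

import Mathlib

open Finset Filter

noncomputable def Q (i n : ℕ) : ℝ :=
  ∏ j ∈ Finset.Icc 1 n, (((i : ℝ) + 1) / (2 * (j : ℝ)) - 1)

/-!
Each factor of `Q i n` with `j > i` has absolute value at most `1`, since then
`0 < (i + 1) / (2 j) ≤ 1`. Hence `|Q i n|` is bounded independently of `n` by the product of the
first `i` factors (each replaced by `max |·| 1`), and dividing by `2 n + 1` forces the limit `0`.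
-/

theorem Finset.abs_prod_le_prod_max_one {ι R : Type*} [CommRing R] [LinearOrder R]
    [IsStrictOrderedRing R] {s t : Finset ι} {f : ι → R} (hf : ∀ j ∈ s, j ∉ t → |f j| ≤ 1) :
    |∏ j ∈ s, f j| ≤ ∏ j ∈ t, max |f j| 1 := by
  classical
  calc |∏ j ∈ s, f j| = ∏ j ∈ s, |f j| := abs_prod s f
    _ ≤ ∏ j ∈ s, max |f j| 1 := prod_le_prod (fun _ _ ↦ abs_nonneg _) fun _ _ ↦ le_max_left _ _
    _ ≤ ∏ j ∈ s ∪ t, max |f j| 1 :=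
      prod_le_prod_of_subset_of_one_le subset_union_left
        (fun _ _ ↦ zero_le_one.trans (le_max_right _ _)) fun _ _ _ ↦ le_max_right _ _
    _ = ∏ j ∈ t, max |f j| 1 := by
      refine (prod_subset subset_union_right fun j hj hjt ↦ max_eq_right ?_).symm
      exact hf j ((mem_union.mp hj).resolve_right hjt) hjt

lemma abs_div_two_mul_sub_one_le_one {i j : ℕ} (hij : i < j) :
    |((i : ℝ) + 1) / (2 * (j : ℝ)) - 1| ≤ 1 := by
  have hj : (0 : ℝ) < j := by exact_mod_cast (Nat.zero_le i).trans_lt hij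
  have hij' : (i : ℝ) + 1 ≤ j := by exact_mod_cast hij
  have hle : ((i : ℝ) + 1) / (2 * (j : ℝ)) ≤ 1 := by
    rw [div_le_one (by positivity)]
    linarith
  rw [abs_le]
  constructor <;> linarith [show 0 < ((i : ℝ) + 1) / (2 * (j : ℝ)) by positivity]

lemma abs_Q_le (i n : ℕ) :
    |Q i n| ≤ ∏ j ∈ Icc 1 i, max |((i : ℝ) + 1) / (2 * (j : ℝ)) - 1| 1 :=
  abs_prod_le_prod_max_one fun j hjn hji ↦ by
    simp only [mem_Icc] at hjn hji
    exact abs_div_two_mul_sub_one_le_one (by omega)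

theorem stmt_16_general (i : ℕ) :
    Filter.Tendsto (fun n : ℕ => (-1 : ℝ) ^ n * Q i n / (2 * (n : ℝ) + 1))
      Filter.atTop (nhds 0) := by
  set C := ∏ j ∈ Icc 1 i, max |((i : ℝ) + 1) / (2 * (j : ℝ)) - 1| 1
  have hbound (n : ℕ) : |(-1 : ℝ) ^ n * Q i n| ≤ C := by
    simpa only [abs_mul, abs_pow, abs_neg, abs_one, one_pow, one_mul] using abs_Q_le i n
  have hden : Tendsto (fun n : ℕ ↦ 2 * (n : ℝ) + 1) atTop atTop :=
    tendsto_atTop_add_const_right _ _ (tendsto_natCast_atTop_atTop.const_mul_atTop two_pos)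
  exact tendsto_bdd_div_atTop_nhds_zero (b := -C) (B := C)
    (Eventually.of_forall fun n ↦ (abs_le.mp (hbound n)).1)
    (Eventually.of_forall fun n ↦ (abs_le.mp (hbound n)).2) hden

theorem stmt_16 (i : ℕ) (hi : 1 ≤ i) :
    Filter.Tendsto (fun n : ℕ => (-1 : ℝ) ^ n * Q i n / (2 * (n : ℝ) + 1))
      Filter.atTop (nhds 0) :=
  stmt_16_general i
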